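/- arXiv:cond-mat/0609584 — 2 statements merged into one kernel-verified Lean document; each statement's English description precedes it below -/
import Mathlib

section
/- An LFSR sequence of order n over F_m (m prime) with nonzero initial state has period m^n − 1 if and only if its characteristic polynomial f(x) = x^n − a_1 x^{n-1} − ... − a_n is primitive over F_m (i.e., f is irreducible and a root of f generates the multiplicative group of F_{m^n}). -/
open Polynomial

/-- The characteristic polynomial `x^n - a₁ x^(n-1) - ... - aₙ` of the LFSR
recurrence `r i = a₁ r (i-1) + ... + aₙ r (i-n)` over `F_m`. -/
noncomputable def lfsrCharPoly (m n : ℕ) (a : Fin n → ZMod m) : Polynomial (ZMod m) :=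
  Polynomial.X ^ n - ∑ k : Fin n, Polynomial.C (a k) * Polynomial.X ^ (n - (k.1 + 1))

/-- `f` is primitive over `F_m`: it is irreducible and its root generates the
multiplicative group of `F_{m^n}` (i.e. the root has multiplicative order `m^n - 1`). -/
def IsPrimitivePoly (m n : ℕ) (a : Fin n → ZMod m) : Prop :=
  Irreducible (lfsrCharPoly m n a) ∧
    orderOf (AdjoinRoot.root (lfsrCharPoly m n a)) = m ^ n - 1

/-!
Let `A = F_m[x]/(f)` and let `L : A → F_m` be the linear form with `L(xⁱ) = rᵢ`; it exists
because `r` satisfies the recurrence of `f`. The sequence has period `T` iff `x^T - 1` lies in the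
ideal `J = {u | L(A u) = 0}`, so its least period is the order of the image of `x` in `A/J`, and
`J ≠ A` because the initial state is nonzero. If `f` is primitive, `A` is a field, so `J = 0` and
the least period is the order of `x` in `A`, namely `m^n - 1`. Conversely, an element of order
`m^n - 1 = |A| - 1` in `A/J` is a unit, so `A/J` has at least `|A| - 1` units but at most `|A|`
elements; hence `J = 0` and every nonzero element of `A` is a unit: `A` is a field and `f` is
irreducible.
-/

theorem orderOf_eq_iff_isLeast {M : Type*} [Monoid M] {x : M} {k : ℕ} (hk : 0 < k) :
    orderOf x = k ↔ IsLeast {T | 0 < T ∧ x ^ T = 1} k := by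
  rw [orderOf_eq_iff hk]
  constructor
  · rintro ⟨hxk, hmin⟩
    exact ⟨⟨hk, hxk⟩, fun T ⟨hT, hxT⟩ => not_lt.1 fun hTk => hmin T hTk hT hxT⟩
  · rintro ⟨⟨-, hxk⟩, hlow⟩
    exact ⟨hxk, fun T hTk hT hxT => (hlow ⟨hT, hxT⟩).not_gt hTk⟩

theorem orderOf_le_natCard_units {M : Type*} [Monoid M] [Finite Mˣ] {x : M}
    (hx : 0 < orderOf x) : orderOf x ≤ Nat.card Mˣ := by
  obtain ⟨u, rfl⟩ := IsUnit.of_pow_eq_one (pow_orderOf_eq_one x) hx.ne'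
  rw [orderOf_units]
  exact orderOf_le_card

theorem isField_of_natCard_le_natCard_units_add_one {R : Type*} [CommRing R] [Nontrivial R]
    [Finite R] (h : Nat.card R ≤ Nat.card Rˣ + 1) : IsField R := by
  have hunits : Set.range ((↑) : Rˣ → R) = {0}ᶜ := by
    refine Set.eq_of_subset_of_ncard_le (by rintro _ ⟨u, rfl⟩; exact u.ne_zero) ?_
    rw [Set.ncard_compl, Set.ncard_singleton, Set.ncard_range_of_injective Units.val_injective]
    omega
  refine ⟨exists_pair_ne R, mul_comm, fun {x} hx => ?_⟩
  obtain ⟨u, rfl⟩ : x ∈ Set.range ((↑) : Rˣ → R) := hunits ▸ hx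
  exact ⟨↑u⁻¹, u.mul_inv⟩

theorem Ideal.injective_mk_and_isField_of_orderOf_mk_eq {R : Type*} [CommRing R] [Finite R]
    {J : Ideal R} (hJ : J ≠ ⊤) {x : R}
    (hx : orderOf (Ideal.Quotient.mk J x) = Nat.card R - 1) :
    Function.Injective (Ideal.Quotient.mk J) ∧ IsField R := by
  have : Nontrivial (R ⧸ J) := Ideal.Quotient.nontrivial_iff.mpr hJ
  have hsurj := Ideal.Quotient.mk_surjective (I := J)
  have : Finite (R ⧸ J) := Finite.of_surjective _ hsurj
  have hcard_le : Nat.card (R ⧸ J) ≤ Nat.card R := Nat.card_le_card_of_surjective _ hsurj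
  have hunits_lt : Nat.card (R ⧸ J)ˣ < Nat.card (R ⧸ J) := natCard_units_lt _
  have hunits_pos : 0 < Nat.card (R ⧸ J)ˣ := Nat.card_pos
  have hord_le : orderOf (Ideal.Quotient.mk J x) ≤ Nat.card (R ⧸ J)ˣ :=
    orderOf_le_natCard_units (by omega)
  have hinj : Function.Injective (Ideal.Quotient.mk J) :=
    (hsurj.bijective_of_nat_card_le (by omega)).1
  refine ⟨hinj, ?_⟩
  have hfield : IsField (R ⧸ J) := isField_of_natCard_le_natCard_units_add_one (by omega)
  exact (RingEquiv.ofBijective _ ⟨hinj, hsurj⟩).toMulEquiv.isField hfield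

theorem AdjoinRoot.isField_iff_irreducible {K : Type*} [Field K] {f : K[X]} (hf : f ≠ 0) :
    IsField (AdjoinRoot f) ↔ Irreducible f :=
  (Ideal.Quotient.maximal_ideal_iff_isField_quotient _).symm.trans
    (Ideal.irreducible_iff_isMaximal_span_singleton hf).symm

namespace LinearMap

variable {K A : Type*} [CommRing K] [CommRing A] [Algebra K A]

def kerIdeal (L : A →ₗ[K] K) : Ideal A where
  carrier := {u | ∀ v, L (v * u) = 0}
  add_mem' {u w} hu hw v := by rw [mul_add, map_add, hu v, hw v, add_zero]
  zero_mem' v := by rw [mul_zero, map_zero]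
  smul_mem' c u hu v := by rw [smul_eq_mul, ← mul_assoc]; exact hu _

theorem mem_kerIdeal_iff_of_powerBasis (pb : PowerBasis K A) {L : A →ₗ[K] K} {u : A} :
    u ∈ L.kerIdeal ↔ ∀ i : ℕ, L (pb.gen ^ i * u) = 0 := by
  refine ⟨fun hu i => hu _, fun hu v => ?_⟩
  have : L ∘ₗ LinearMap.mulRight K u = 0 :=
    pb.basis.ext fun i => by simp [pb.basis_eq_pow, hu]
  exact LinearMap.congr_fun this v

end LinearMap

section Lfsr

variable {m n : ℕ}

theorem degree_lfsrCharPoly_tail_lt (a : Fin n → ZMod m) :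
    (∑ k : Fin n, C (a k) * X ^ (n - (k.1 + 1))).degree < (n : WithBot ℕ) := by
  refine (degree_sum_le _ _).trans_lt <|
    (Finset.sup_lt_iff (WithBot.bot_lt_coe n : ⊥ < (n : WithBot ℕ))).2 fun k _ => ?_
  exact (degree_C_mul_X_pow_le _ _).trans_lt (Nat.cast_lt.2 (by omega))

theorem lfsrCharPoly_monic (a : Fin n → ZMod m) : (lfsrCharPoly m n a).Monic :=
  monic_X_pow_sub (degree_lfsrCharPoly_tail_lt a)

theorem natDegree_lfsrCharPoly [Fact m.Prime] (a : Fin n → ZMod m) :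
    (lfsrCharPoly m n a).natDegree = n :=
  natDegree_eq_of_degree_eq_some <| by
    rw [lfsrCharPoly, degree_sub_eq_left_of_degree_lt, degree_X_pow]
    rw [degree_X_pow]
    exact degree_lfsrCharPoly_tail_lt a

instance [NeZero m] (a : Fin n → ZMod m) : Finite (AdjoinRoot (lfsrCharPoly m n a)) :=
  have := (lfsrCharPoly_monic a).finite_adjoinRoot
  Module.finite_of_finite (ZMod m)

theorem natCard_adjoinRoot_lfsrCharPoly [Fact m.Prime] (a : Fin n → ZMod m) :
    Nat.card (AdjoinRoot (lfsrCharPoly m n a)) = m ^ n := by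
  have := (lfsrCharPoly_monic a).finite_adjoinRoot
  rw [Module.natCard_eq_pow_finrank (K := ZMod m), Nat.card_zmod,
    (AdjoinRoot.powerBasis' (lfsrCharPoly_monic a)).finrank, AdjoinRoot.powerBasis'_dim,
    natDegree_lfsrCharPoly a]

theorem root_lfsrCharPoly_pow (a : Fin n → ZMod m) :
    AdjoinRoot.root (lfsrCharPoly m n a) ^ n =
      ∑ k : Fin n, a k • AdjoinRoot.root (lfsrCharPoly m n a) ^ (n - (k.1 + 1)) := by
  have h : aeval (AdjoinRoot.root (lfsrCharPoly m n a)) (lfsrCharPoly m n a) = 0 := by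
    rw [AdjoinRoot.aeval_eq, AdjoinRoot.mk_self]
  unfold lfsrCharPoly at h ⊢
  simp only [map_sub, map_pow, map_sum, map_mul, aeval_X, aeval_C, sub_eq_zero] at h
  simp only [h, Algebra.smul_def]

noncomputable def lfsrFunctional (a : Fin n → ZMod m) (r : ℕ → ZMod m) :
    Module.Dual (ZMod m) (AdjoinRoot (lfsrCharPoly m n a)) :=
  (AdjoinRoot.powerBasis' (lfsrCharPoly_monic a)).basis.constr (ZMod m) fun k => r k

variable [Fact m.Prime] (a : Fin n → ZMod m) (r : ℕ → ZMod m)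
  (hrec : ∀ i, r (i + n) = ∑ k : Fin n, a k * r (i + n - (k.1 + 1)))
include hrec

theorem lfsrFunctional_root_pow (i : ℕ) :
    lfsrFunctional a r (AdjoinRoot.root (lfsrCharPoly m n a) ^ i) = r i := by
  induction i using Nat.strong_induction_on with
  | _ i ih =>
    obtain hi | ⟨j, rfl⟩ : i < n ∨ ∃ j, i = j + n :=
      (lt_or_ge i n).imp_right fun h => ⟨i - n, by omega⟩
    · have hi' : i < (AdjoinRoot.powerBasis' (lfsrCharPoly_monic a)).dim := by
        rwa [AdjoinRoot.powerBasis'_dim, natDegree_lfsrCharPoly a]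
      have := (AdjoinRoot.powerBasis' (lfsrCharPoly_monic a)).basis_eq_pow ⟨i, hi'⟩
      rw [AdjoinRoot.powerBasis'_gen] at this
      rw [← this, lfsrFunctional, Module.Basis.constr_basis]
    · rw [pow_add, root_lfsrCharPoly_pow, Finset.mul_sum, map_sum, hrec j]
      refine Finset.sum_congr rfl fun k _ => ?_
      rw [mul_smul_comm, map_smul, ← pow_add, smul_eq_mul, ← ih _ (by omega)]
      congr 3
      omega

theorem periodic_iff_mk_root_pow_eq_one (T : ℕ) :
    (∀ i, r (i + T) = r i) ↔
      Ideal.Quotient.mk (lfsrFunctional a r).kerIdeal (AdjoinRoot.root (lfsrCharPoly m n a)) ^ T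
        = 1 := by
  have hshift (i : ℕ) : lfsrFunctional a r (AdjoinRoot.root (lfsrCharPoly m n a) ^ i *
      (AdjoinRoot.root (lfsrCharPoly m n a) ^ T - 1)) = r (i + T) - r i := by
    rw [mul_sub, mul_one, ← pow_add, map_sub, lfsrFunctional_root_pow a r hrec,
      lfsrFunctional_root_pow a r hrec]
  rw [← map_pow, ← map_one (Ideal.Quotient.mk _), Ideal.Quotient.eq,
    LinearMap.mem_kerIdeal_iff_of_powerBasis (AdjoinRoot.powerBasis' (lfsrCharPoly_monic a)),
    AdjoinRoot.powerBasis'_gen]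
  simp only [hshift, sub_eq_zero]

theorem kerIdeal_lfsrFunctional_ne_top (hnz : ∃ j, j < n ∧ r j ≠ 0) :
    (lfsrFunctional a r).kerIdeal ≠ ⊤ := by
  obtain ⟨j, -, hj⟩ := hnz
  intro h
  have := (Ideal.eq_top_iff_one _).1 h (AdjoinRoot.root (lfsrCharPoly m n a) ^ j)
  rw [mul_one, lfsrFunctional_root_pow a r hrec] at this
  exact hj this

end Lfsr

theorem lfsr_maximal_period_iff_primitive_general (m n : ℕ) [Fact (Nat.Prime m)]
    (a : Fin n → ZMod m) (r : ℕ → ZMod m)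
    (hrec : ∀ i, r (i + n) = ∑ k : Fin n, a k * r (i + n - (k.1 + 1)))
    (hnz : ∃ j, j < n ∧ r j ≠ 0) :
    IsLeast {T | 0 < T ∧ ∀ i, r (i + T) = r i} (m ^ n - 1) ↔ IsPrimitivePoly m n a := by
  set J := (lfsrFunctional a r).kerIdeal
  set y := Ideal.Quotient.mk J (AdjoinRoot.root (lfsrCharPoly m n a))
  have hJ : J ≠ ⊤ := kerIdeal_lfsrFunctional_ne_top a r hrec hnz
  have hpos : 0 < m ^ n - 1 := by
    obtain ⟨j, hj, -⟩ := hnz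
    have := Nat.one_lt_pow (by omega : n ≠ 0) (Fact.out : m.Prime).one_lt
    omega
  have hperiod :
      IsLeast {T | 0 < T ∧ ∀ i, r (i + T) = r i} (m ^ n - 1) ↔ orderOf y = m ^ n - 1 := by
    simp_rw [periodic_iff_mk_root_pow_eq_one a r hrec, orderOf_eq_iff_isLeast hpos, y, J]
  rw [hperiod, IsPrimitivePoly]
  constructor
  · intro hord
    obtain ⟨hinj, hfield⟩ := Ideal.injective_mk_and_isField_of_orderOf_mk_eq hJ
      (by rw [hord, natCard_adjoinRoot_lfsrCharPoly a])
    exact ⟨(AdjoinRoot.isField_iff_irreducible (lfsrCharPoly_monic a).ne_zero).mp hfield,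
      orderOf_injective (Ideal.Quotient.mk J).toMonoidHom hinj _ ▸ hord⟩
  · rintro ⟨hirr, hord⟩
    have := Fact.mk hirr
    have := Ideal.Quotient.nontrivial_iff.mpr hJ
    rw [← hord]
    exact orderOf_injective (Ideal.Quotient.mk J).toMonoidHom (Ideal.Quotient.mk J).injective _

/-- An LFSR sequence of order `n` over `F_m` with nonzero initial state has
(least) period `m^n - 1` if and only if its characteristic polynomial is primitive. -/
theorem lfsr_maximal_period_iff_primitive (m n : ℕ) [Fact (Nat.Prime m)] (hn : 0 < n)
    (a : Fin n → ZMod m) (r : ℕ → ZMod m)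
    (hrec : ∀ i, r (i + n) = ∑ k : Fin n, a k * r (i + n - (k.1 + 1)))
    (hnz : ∃ j, j < n ∧ r j ≠ 0) :
    IsLeast {T | 0 < T ∧ ∀ i, r (i + T) = r i} (m ^ n - 1) ↔ IsPrimitivePoly m n a :=
  lfsr_maximal_period_iff_primitive_general m n a r hrec hnz
end

section
/- Let m = 2^e − k with k ≥ 1, k(k+2) ≤ m, and let s be an integer with 0 ≤ s ≤ (m−k)^2. Define s' = (s mod 2^e) + k·⌊s/2^e⌋ and x = (s' mod 2^e) + k·⌊s'/2^e⌋. Then s ≡ s' ≡ x (mod m) and x < m + k(k+2) ≤ 2m, so s mod m equals x or x − m. -/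
/-!
Write `b = 2^e = m + k`. Splitting `n = (n mod b) + b⌊n/b⌋` and using `b ≡ k (mod m)` shows that
the fold `n ↦ (n mod b) + k⌊n/b⌋` preserves `n mod m`. Since `s ≤ (m - k)^2 ≤ b^2`, the first fold
has high part `⌊s/b⌋ ≤ b`, so `s' < b + kb` and the second fold has high part `⌊s'/b⌋ ≤ k`;
hence `x < b + k^2 ≤ m + k(k+2)`.
-/

def foldStep (b k n : ℕ) : ℕ := n % b + k * (n / b)

section foldStep

variable {b k m : ℕ}

theorem foldStep_add_mul_div (h : m + k = b) (n : ℕ) : foldStep b k n + m * (n / b) = n := by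
  rw [foldStep, ← h]
  linarith [Nat.mod_add_div n (m + k)]

theorem foldStep_mod (h : m + k = b) (n : ℕ) : foldStep b k n % m = n % m := by
  conv_rhs => rw [← foldStep_add_mul_div h n]
  rw [Nat.add_mul_mod_self_left]

theorem foldStep_div_le {n : ℕ} (hn : n / b ≤ b) : foldStep b k n / b ≤ k := by
  rcases Nat.eq_zero_or_pos b with rfl | hb
  · simp
  have hlt : foldStep b k n < b * (k + 1) := by
    have := Nat.mod_lt n hb
    have := Nat.mul_le_mul_left k hn
    rw [foldStep]
    nlinarith
  exact Nat.lt_succ_iff.mp (Nat.div_lt_of_lt_mul hlt)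

theorem foldStep_lt {n : ℕ} (hb : 0 < b) (hn : n / b ≤ k) : foldStep b k n < b + k * k :=
  Nat.add_lt_add_of_lt_of_le (Nat.mod_lt n hb) (Nat.mul_le_mul_left k hn)

end foldStep

theorem Nat.mod_eq_or_eq_sub_of_lt_two_mul {x m : ℕ} (hx : x < 2 * m) :
    x % m = x ∨ x % m = x - m := by
  rcases Nat.lt_or_ge x m with h | h
  · exact Or.inl (Nat.mod_eq_of_lt h)
  · exact Or.inr (by rw [Nat.mod_eq_sub_mod h, Nat.mod_eq_of_lt (by omega)])

theorem sophie_germain_fast_reduction_general (e k s : ℕ)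
    (hkm : k * (k + 2) ≤ 2 ^ e - k) (hs : s ≤ (2 ^ e - k - k) ^ 2) :
    let m := 2 ^ e - k
    let s' := s % 2 ^ e + k * (s / 2 ^ e)
    let x := s' % 2 ^ e + k * (s' / 2 ^ e)
    s % m = s' % m ∧ s' % m = x % m ∧
      x < m + k * (k + 2) ∧ m + k * (k + 2) ≤ 2 * m ∧
      (s % m = x ∨ s % m = x - m) := by
  intro m s' x
  have hkb : k ≤ 2 ^ e :=
    (Nat.le_mul_of_pos_right k (by omega)).trans (hkm.trans (Nat.sub_le _ _))
  have hmk : m + k = 2 ^ e := Nat.sub_add_cancel hkb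
  have hq : s / 2 ^ e ≤ 2 ^ e :=
    Nat.div_le_of_le_mul (hs.trans (by rw [← sq]; exact Nat.pow_le_pow_left (by omega) 2))
  have hq' : s' / 2 ^ e ≤ k := foldStep_div_le hq
  have hA : s % m = s' % m := (foldStep_mod hmk s).symm
  have hB : s' % m = x % m := (foldStep_mod hmk s').symm
  have hC : x < m + k * (k + 2) :=
    (foldStep_lt (by positivity) hq').trans_le (by rw [← hmk]; nlinarith)
  have hD : m + k * (k + 2) ≤ 2 * m := by omega
  refine ⟨hA, hB, hC, hD, ?_⟩
  rw [hA.trans hB]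
  exact Nat.mod_eq_or_eq_sub_of_lt_two_mul (by omega)

/-- Generalized fast modular reduction for `m = 2^e - k` with `k(k+2) ≤ m`:
with `s' = (s mod 2^e) + k⌊s/2^e⌋` and `x = (s' mod 2^e) + k⌊s'/2^e⌋` one has
`s ≡ s' ≡ x (mod m)` and `x < m + k(k+2) ≤ 2m`, so `s mod m` equals `x` or `x - m`. -/
theorem sophie_germain_fast_reduction (e k s : ℕ) (he : 0 < e) (hk : 1 ≤ k)
    (hkm : k * (k + 2) ≤ 2 ^ e - k) (hs : s ≤ (2 ^ e - k - k) ^ 2) :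
    let m := 2 ^ e - k
    let s' := s % 2 ^ e + k * (s / 2 ^ e)
    let x := s' % 2 ^ e + k * (s' / 2 ^ e)
    s % m = s' % m ∧ s' % m = x % m ∧
      x < m + k * (k + 2) ∧ m + k * (k + 2) ≤ 2 * m ∧
      (s % m = x ∨ s % m = x - m) :=
  sophie_germain_fast_reduction_general e k s hkm hs
end
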